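/- Let T > 0, r, μ₁, μ₂ ∈ ℝ, σ₁ > 0, σ₂ > 0. For reals P₁ ≥ 0, P₂ ≥ 0 define Θ̄₁(P₁,P₂) = −{σ₁ + P₁[σ₁ − σ₂²P₂σ₁/(σ₂+σ₂²P₂)]²}⁻¹ · {P₁[(μ₁−r) − (μ₂−r)σ₂P₂σ₁/(σ₂+σ₂²P₂)] − P₁[σ₁ − σ₂²P₂σ₁/(σ₂+σ₂²P₂)]·[σ₂(μ₂−r)P₂/(σ₂+σ₂²P₂)]}. Then there exists exactly one pair of continuously differentiable functions P₁, P₂ : [0,T] → [0,∞) satisfying, for all s ∈ [0,T] (with Θ̄₁ = Θ̄₁(P₁(s),P₂(s))): P₂'(s) = −2[r+(μ₁−r)Θ̄₁]P₂ − σ₁²Θ̄₁²P₂ + [P₂(μ₂−r)+σ₁Θ̄₁P₂σ₂]²/(σ₂+σ₂²P₂), P₁'(s) = −2P₁{r+(μ₁−r)Θ̄₁ − (μ₂−r)[(μ₂−r)P₂+σ₂P₂σ₁Θ̄₁]/(σ₂+σ₂²P₂)} − P₁{σ₁Θ̄₁ − σ₂[(μ₂−r)P₂+σ₂P₂σ₁Θ̄₁]/(σ₂+σ₂²P₂)}²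 − σ₁Θ̄₁², with terminal conditions P₂(T) = 1 and P₁(T) = 1. -/

import Mathlib

set_option linter.unusedVariables false

noncomputable section

/-- The leader's equilibrium gain `Θ̄₁(P₁,P₂)` for the asset-management scalar ERE. -/
def assetTheta1 (r μ₁ μ₂ σ₁ σ₂ P₁ P₂ : ℝ) : ℝ :=
  -(σ₁ + P₁ * (σ₁ - σ₂ ^ 2 * P₂ * σ₁ / (σ₂ + σ₂ ^ 2 * P₂)) ^ 2)⁻¹ *
    (P₁ * ((μ₁ - r) - (μ₂ - r) * σ₂ * P₂ * σ₁ / (σ₂ + σ₂ ^ 2 * P₂))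
      - P₁ * (σ₁ - σ₂ ^ 2 * P₂ * σ₁ / (σ₂ + σ₂ ^ 2 * P₂))
          * (σ₂ * (μ₂ - r) * P₂ / (σ₂ + σ₂ ^ 2 * P₂)))

/-- Right-hand side of the `P₂`-equation of the asset-management scalar ERE. -/
def assetRhs2 (r μ₁ μ₂ σ₁ σ₂ P₁ P₂ : ℝ) : ℝ :=
  -2 * (r + (μ₁ - r) * assetTheta1 r μ₁ μ₂ σ₁ σ₂ P₁ P₂) * P₂
    - σ₁ ^ 2 * (assetTheta1 r μ₁ μ₂ σ₁ σ₂ P₁ P₂) ^ 2 * P₂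
    + (P₂ * (μ₂ - r) + σ₁ * assetTheta1 r μ₁ μ₂ σ₁ σ₂ P₁ P₂ * P₂ * σ₂) ^ 2
        / (σ₂ + σ₂ ^ 2 * P₂)

/-- Right-hand side of the `P₁`-equation of the asset-management scalar ERE. -/
def assetRhs1 (r μ₁ μ₂ σ₁ σ₂ P₁ P₂ : ℝ) : ℝ :=
  -2 * P₁ * (r + (μ₁ - r) * assetTheta1 r μ₁ μ₂ σ₁ σ₂ P₁ P₂
      - (μ₂ - r) * ((μ₂ - r) * P₂ + σ₂ * P₂ * σ₁ * assetTheta1 r μ₁ μ₂ σ₁ σ₂ P₁ P₂)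
          / (σ₂ + σ₂ ^ 2 * P₂))
    - P₁ * (σ₁ * assetTheta1 r μ₁ μ₂ σ₁ σ₂ P₁ P₂
      - σ₂ * ((μ₂ - r) * P₂ + σ₂ * P₂ * σ₁ * assetTheta1 r μ₁ μ₂ σ₁ σ₂ P₁ P₂)
          / (σ₂ + σ₂ ^ 2 * P₂)) ^ 2
    - σ₁ * (assetTheta1 r μ₁ μ₂ σ₁ σ₂ P₁ P₂) ^ 2

/-- A pair `(P₁,P₂)` of nonnegative continuously differentiable functions solving the
asset-management scalar ERE on `[0,T]` with terminal values `P₁(T) = P₂(T) = 1`. -/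
def IsAssetERESolution (T r μ₁ μ₂ σ₁ σ₂ : ℝ) (P₁ P₂ : ℝ → ℝ) : Prop :=
  (∀ s ∈ Set.Icc (0 : ℝ) T, 0 ≤ P₁ s ∧ 0 ≤ P₂ s) ∧
  (∀ s ∈ Set.Icc (0 : ℝ) T,
    HasDerivWithinAt P₂ (assetRhs2 r μ₁ μ₂ σ₁ σ₂ (P₁ s) (P₂ s)) (Set.Icc (0 : ℝ) T) s ∧
    HasDerivWithinAt P₁ (assetRhs1 r μ₁ μ₂ σ₁ σ₂ (P₁ s) (P₂ s)) (Set.Icc (0 : ℝ) T) s) ∧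
  P₂ T = 1 ∧ P₁ T = 1

/-!
Write `e = p₂ / (1 + σ₂ p₂)` and `x = σ₁ / (1 + σ₂ p₂)`. Then
`Θ̄₁ = -p₁ (μ₁ - r - (μ₂ - r)(σ₁ + x) e) / (σ₁ + p₁ x²)`, the right-hand sides are `C¹` on the
closed quadrant and vanish on the axes, and they obey one-sided linear bounds:
`-P₁' ≤ 2|r| P₁`, `|Θ̄₁| ≤ C P₁`, and hence `-P₂' ≤ K P₂` as long as `P₁` is bounded.
Backward Grönwall from the terminal value `1` confines every nonnegative solution to a fixed box
`[0, M]²`. Truncating the field outside that box makes it globally Lipschitz and bounded, so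
Picard–Lindelöf gives a solution on all of `[0, T]`; since the truncated field still vanishes on
the axes, a component that reached `0` would stay `0` up to time `T`, so the solution is
nonnegative, hence stays in the box and solves the original system. Uniqueness is Lipschitz
uniqueness on the box.
-/

open Set Real NNReal

section ODE

variable {E : Type*} [NormedAddCommGroup E] [NormedSpace ℝ E]

theorem hasDerivWithinAt_prodMk_iff {F : Type*} [NormedAddCommGroup F] [NormedSpace ℝ F]
    {f : ℝ → E} {g : ℝ → F} {f' : E} {g' : F} {s : Set ℝ} {x : ℝ} :
    HasDerivWithinAt (fun t => (f t, g t)) (f', g') s x ↔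
      HasDerivWithinAt f f' s x ∧ HasDerivWithinAt g g' s x :=
  ⟨fun h => ⟨(ContinuousLinearMap.fst ℝ E F).hasFDerivAt.comp_hasDerivWithinAt x h,
      (ContinuousLinearMap.snd ℝ E F).hasFDerivAt.comp_hasDerivWithinAt x h⟩,
    fun h => h.1.prodMk h.2⟩

theorem exists_forall_mem_Icc_hasDerivWithinAt_of_lipschitzWith [CompleteSpace E]
    {F : E → E} {K : ℝ≥0} {L : ℝ} (hF : LipschitzWith K F) (hL : ∀ x, ‖F x‖ ≤ L)
    {a b : ℝ} (t₀ : Icc a b) (x₀ : E) :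
    ∃ α : ℝ → E, α t₀ = x₀ ∧ ∀ t ∈ Icc a b, HasDerivWithinAt α (F (α t)) (Icc a b) t := by
  have hab : 0 ≤ b - a := sub_nonneg.2 (t₀.2.1.trans t₀.2.2)
  have hpl : IsPicardLindelof (fun _ => F) t₀ x₀ (L.toNNReal * (b - a).toNNReal) 0
      L.toNNReal K := by
    refine .of_time_independent (fun x _ => (hL x).trans (le_coe_toNNReal L))
      hF.lipschitzOnWith ?_
    rw [NNReal.coe_mul, Real.coe_toNNReal _ hab, NNReal.coe_zero, sub_zero]
    gcongr
    exact max_le (by linarith [t₀.2.1]) (by linarith [t₀.2.2])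
  exact hpl.exists_eq_forall_mem_Icc_hasDerivWithinAt₀

theorem eqOn_Icc_of_hasDerivWithinAt_of_lipschitzOnWith {F : E → E} {K : ℝ≥0} {s : Set E}
    (hF : LipschitzOnWith K F s) {f g : ℝ → E} {a b : ℝ}
    (hf : ∀ t ∈ Icc a b, HasDerivWithinAt f (F (f t)) (Icc a b) t)
    (hg : ∀ t ∈ Icc a b, HasDerivWithinAt g (F (g t)) (Icc a b) t)
    (hfs : ∀ t ∈ Icc a b, f t ∈ s) (hgs : ∀ t ∈ Icc a b, g t ∈ s) (hb : f b = g b) :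
    EqOn f g (Icc a b) := by
  have hIic : ∀ u : ℝ → E, (∀ t ∈ Icc a b, HasDerivWithinAt u (F (u t)) (Icc a b) t) →
      ∀ t ∈ Ioc a b, HasDerivWithinAt u (F (u t)) (Iic t) t := fun u hu t ht =>
    (hu t (Ioc_subset_Icc_self ht)).mono_of_mem_nhdsWithin (Icc_mem_nhdsLE_of_mem ht)
  exact ODE_solution_unique_of_mem_Icc_left (v := fun _ => F) (s := fun _ => s) (fun _ _ => hF)
    (fun t ht => (hf t ht).continuousWithinAt) (hIic f hf)
    (fun t ht => hfs t (Ioc_subset_Icc_self ht))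
    (fun t ht => (hg t ht).continuousWithinAt) (hIic g hg)
    (fun t ht => hgs t (Ioc_subset_Icc_self ht)) hb

end ODE

theorem le_mul_exp_of_hasDerivWithinAt {v v' : ℝ → ℝ} {a b δ K : ℝ}
    (hv : ∀ t ∈ Icc a b, HasDerivWithinAt v (v' t) (Icc a b) t) (hb : v b ≤ δ)
    (hK : ∀ t ∈ Icc a b, -v' t ≤ K * v t) :
    ∀ t ∈ Icc a b, v t ≤ δ * exp (K * (b - t)) := by
  intro t ht
  have hmono : MonotoneOn (fun u => v u * exp (K * (u - b))) (Icc a b) := by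
    refine monotoneOn_of_hasDerivWithinAt_nonneg (convex_Icc a b)
      (f' := fun u => (v' u + K * v u) * exp (K * (u - b)))
      (fun u hu => (hv u hu).continuousWithinAt.mul (by fun_prop)) (fun u hu => ?_)
      (fun u hu => ?_)
    · rw [interior_Icc] at hu
      have hexp : HasDerivAt (fun u => exp (K * (u - b))) (exp (K * (u - b)) * K) u := by
        simpa using ((hasDerivAt_id u).sub_const b).const_mul K |>.exp
      exact (((hv u (Ioo_subset_Icc_self hu)).mul hexp.hasDerivWithinAt).mono
        interior_subset).congr_deriv (by ring)
    · rw [interior_Icc] at hu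
      have := hK u (Ioo_subset_Icc_self hu)
      exact mul_nonneg (by linarith) (exp_pos _).le
  have hbt := hmono ht ⟨ht.1.trans ht.2, le_rfl⟩ ht.2
  simp only [sub_self, mul_zero, exp_zero, mul_one] at hbt
  calc v t = v t * exp (K * (t - b)) * exp (K * (b - t)) := by
        rw [mul_assoc, ← exp_add, show K * (t - b) + K * (b - t) = 0 by ring, exp_zero, mul_one]
    _ ≤ δ * exp (K * (b - t)) := by gcongr; linarith

theorem pos_of_abs_deriv_le_mul_abs {v v' : ℝ → ℝ} {a b K : ℝ}
    (hv : ∀ t ∈ Icc a b, HasDerivWithinAt v (v' t) (Icc a b) t)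
    (hK : ∀ t ∈ Icc a b, |v' t| ≤ K * |v t|) (hb : 0 < v b) :
    ∀ t ∈ Icc a b, 0 < v t := by
  intro t ht
  by_contra! hvt
  have hcont : ContinuousOn v (Icc t b) := fun u hu =>
    (hv u ⟨ht.1.trans hu.1, hu.2⟩).continuousWithinAt.mono (Icc_subset_Icc ht.1 le_rfl)
  -- a zero of `v` before `b` would propagate forward to `b`
  obtain ⟨c, hc, hvc⟩ := intermediate_value_Icc ht.2 hcont ⟨hvt, hb.le⟩
  have hsub : Icc c b ⊆ Icc a b := Icc_subset_Icc (ht.1.trans hc.1) le_rfl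
  have hvb := eq_zero_of_abs_deriv_le_mul_abs_self_of_eq_zero_right
    (hcont.mono (Icc_subset_Icc hc.1 le_rfl))
    (fun u hu => (hv u (hsub (Ico_subset_Icc_self hu))).mono_of_mem_nhdsWithin
      (Icc_mem_nhdsGE_of_mem ⟨(ht.1.trans hc.1).trans hu.1, hu.2⟩))
    hvc (fun u hu => hK u (hsub (Ico_subset_Icc_self hu))) b ⟨hc.2, le_rfl⟩
  exact hb.ne' hvb

theorem abs_le_of_lipschitzWith_of_vanishing_on_axes {F : ℝ × ℝ → ℝ × ℝ} {K : ℝ≥0}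
    (hF : LipschitzWith K F) (h₁ : ∀ y, (F (0, y)).1 = 0) (h₂ : ∀ x, (F (x, 0)).2 = 0)
    (p : ℝ × ℝ) : |(F p).1| ≤ K * |p.1| ∧ |(F p).2| ≤ K * |p.2| := by
  constructor
  · calc |(F p).1| = dist (F p).1 (F (0, p.2)).1 := by rw [h₁, Real.dist_eq, sub_zero]
      _ ≤ dist (F p) (F (0, p.2)) := by rw [Prod.dist_eq]; exact le_max_left _ _
      _ ≤ K * dist p (0, p.2) := hF.dist_le_mul _ _
      _ = K * |p.1| := by simp [Prod.dist_eq]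
  · calc |(F p).2| = dist (F p).2 (F (p.1, 0)).2 := by rw [h₂, Real.dist_eq, sub_zero]
      _ ≤ dist (F p) (F (p.1, 0)) := by rw [Prod.dist_eq]; exact le_max_right _ _
      _ ≤ K * dist p (p.1, 0) := hF.dist_le_mul _ _
      _ = K * |p.2| := by simp [Prod.dist_eq]

def boxClamp (M : ℝ) (p : ℝ × ℝ) : ℝ × ℝ := (max 0 (min p.1 M), max 0 (min p.2 M))

theorem boxClamp_mem {M : ℝ} (hM : 0 ≤ M) (p : ℝ × ℝ) : boxClamp M p ∈ Icc 0 (M, M) :=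
  ⟨⟨le_max_left _ _, le_max_left _ _⟩,
    ⟨max_le hM (min_le_right _ _), max_le hM (min_le_right _ _)⟩⟩

theorem boxClamp_mem_Icc_zero {M : ℝ} {p : ℝ × ℝ} (hp : 0 ≤ p) : boxClamp M p ∈ Icc 0 p :=
  ⟨⟨le_max_left _ _, le_max_left _ _⟩,
    ⟨max_le hp.1 (min_le_left _ _), max_le hp.2 (min_le_left _ _)⟩⟩

theorem boxClamp_eq {M : ℝ} {p : ℝ × ℝ} (hp : p ∈ Icc 0 (M, M)) : boxClamp M p = p := by
  obtain ⟨⟨h₁, h₂⟩, ⟨h₁', h₂'⟩⟩ := hp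
  exact Prod.ext ((congrArg _ (min_eq_left h₁')).trans (max_eq_right h₁))
    ((congrArg _ (min_eq_left h₂')).trans (max_eq_right h₂))

theorem lipschitzWith_boxClamp (M : ℝ) : LipschitzWith 1 (boxClamp M) := by
  show LipschitzWith 1 fun p : ℝ × ℝ => (max 0 (min p.1 M), max 0 (min p.2 M))
  simpa using ((LipschitzWith.prod_fst.min_const M).const_max 0).prodMk
    ((LipschitzWith.prod_snd.min_const M).const_max 0)

theorem div_one_add_mul_le_one_div {σ p : ℝ} (hσ : 0 < σ) (hp : 0 ≤ p) :
    p / (1 + σ * p) ≤ 1 / σ := by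
  rw [div_le_div_iff₀ (by positivity) hσ]
  linarith

theorem abs_sub_mul_le {a b c : ℝ} (hc : 0 ≤ c) : |a - b * c| ≤ |a| + |b| * c :=
  (abs_sub _ _).trans_eq (by rw [abs_mul, abs_of_nonneg hc])

section AssetField

variable {r μ₁ μ₂ σ₁ σ₂ p₁ p₂ : ℝ}

theorem assetTheta1_eq (hσ₂ : σ₂ ≠ 0) (hp₂ : 1 + σ₂ * p₂ ≠ 0) :
    assetTheta1 r μ₁ μ₂ σ₁ σ₂ p₁ p₂ =
      -(p₁ * (μ₁ - r - (μ₂ - r) * (σ₁ + σ₁ / (1 + σ₂ * p₂)) * (p₂ / (1 + σ₂ * p₂)))) /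
        (σ₁ + p₁ * (σ₁ / (1 + σ₂ * p₂)) ^ 2) := by
  have hx : σ₁ - σ₂ ^ 2 * p₂ * σ₁ / (σ₂ + σ₂ ^ 2 * p₂) = σ₁ / (1 + σ₂ * p₂) := by
    field_simp; ring
  have he₁ : (μ₂ - r) * σ₂ * p₂ * σ₁ / (σ₂ + σ₂ ^ 2 * p₂) =
      (μ₂ - r) * σ₁ * (p₂ / (1 + σ₂ * p₂)) := by
    field_simp
  have he₂ : σ₂ * (μ₂ - r) * p₂ / (σ₂ + σ₂ ^ 2 * p₂) = (μ₂ - r) * (p₂ / (1 + σ₂ * p₂)) := by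
    field_simp
  rw [assetTheta1, hx, he₁, he₂, div_eq_mul_inv]
  ring

theorem assetRhs2_eq (hσ₂ : σ₂ ≠ 0) (hp₂ : 1 + σ₂ * p₂ ≠ 0) :
    assetRhs2 r μ₁ μ₂ σ₁ σ₂ p₁ p₂ =
      p₂ * (-2 * r + (μ₂ - r) ^ 2 * (p₂ / (1 + σ₂ * p₂)) / σ₂
        - 2 * (μ₁ - r - (μ₂ - r) * σ₁ * (p₂ / (1 + σ₂ * p₂))) * assetTheta1 r μ₁ μ₂ σ₁ σ₂ p₁ p₂
        - σ₁ * (σ₁ / (1 + σ₂ * p₂)) * assetTheta1 r μ₁ μ₂ σ₁ σ₂ p₁ p₂ ^ 2) := by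
  have hp₂' : 1 + p₂ * σ₂ ≠ 0 := by rwa [mul_comm p₂]
  rw [assetRhs2, show σ₂ + σ₂ ^ 2 * p₂ = σ₂ * (1 + σ₂ * p₂) by ring]
  field_simp
  ring

theorem assetRhs1_eq (hσ₁ : 0 < σ₁) (hσ₂ : σ₂ ≠ 0) (hp₁ : 0 ≤ p₁) (hp₂ : 1 + σ₂ * p₂ ≠ 0) :
    assetRhs1 r μ₁ μ₂ σ₁ σ₂ p₁ p₂ =
      -p₁ * (2 * r - 2 * (μ₂ - r) ^ 2 * (p₂ / (1 + σ₂ * p₂)) / σ₂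
          + (μ₂ - r) ^ 2 * (p₂ / (1 + σ₂ * p₂)) ^ 2)
        + (σ₁ + p₁ * (σ₁ / (1 + σ₂ * p₂)) ^ 2) * assetTheta1 r μ₁ μ₂ σ₁ σ₂ p₁ p₂ ^ 2 := by
  have hp₂' : 1 + p₂ * σ₂ ≠ 0 := by rwa [mul_comm p₂]
  have hθ := assetTheta1_eq (r := r) (μ₁ := μ₁) (μ₂ := μ₂) (σ₁ := σ₁) (p₁ := p₁) hσ₂ hp₂
  rw [eq_div_iff (by positivity)] at hθ
  generalize hθdef : assetTheta1 r μ₁ μ₂ σ₁ σ₂ p₁ p₂ = θ at hθ ⊢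
  have hexpand : assetRhs1 r μ₁ μ₂ σ₁ σ₂ p₁ p₂ =
      -p₁ * (2 * r - 2 * (μ₂ - r) ^ 2 * (p₂ / (1 + σ₂ * p₂)) / σ₂
          + (μ₂ - r) ^ 2 * (p₂ / (1 + σ₂ * p₂)) ^ 2)
        - (σ₁ + p₁ * (σ₁ / (1 + σ₂ * p₂)) ^ 2) * θ ^ 2
        - 2 * θ * (p₁ * (μ₁ - r - (μ₂ - r) * (σ₁ + σ₁ / (1 + σ₂ * p₂)) * (p₂ / (1 + σ₂ * p₂)))) := by
    rw [assetRhs1, hθdef, show σ₂ + σ₂ ^ 2 * p₂ = σ₂ * (1 + σ₂ * p₂) by ring]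
    field_simp
    ring
  -- the formula for `Θ̄₁` turns the cross term into `2 (σ₁ + p₁ x²) θ²`
  rw [hexpand]
  linear_combination (-2 * θ) * hθ

theorem neg_two_mul_abs_mul_le_assetRhs1 (hσ₁ : 0 < σ₁) (hσ₂ : 0 < σ₂) (hp₁ : 0 ≤ p₁)
    (hp₂ : 0 ≤ p₂) : -(2 * |r| * p₁) ≤ assetRhs1 r μ₁ μ₂ σ₁ σ₂ p₁ p₂ := by
  have hc : 0 < 1 + σ₂ * p₂ := by positivity
  rw [assetRhs1_eq hσ₁ hσ₂.ne' hp₁ hc.ne']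
  set e := p₂ / (1 + σ₂ * p₂)
  have he : e ≤ 1 / σ₂ := div_one_add_mul_le_one_div hσ₂ hp₂
  have he₀ : 0 ≤ e := by positivity
  have h₁ : -(2 * |r| * p₁) ≤ -(2 * r * p₁) := by nlinarith [le_abs_self r]
  have h₂ : 0 ≤ p₁ * ((μ₂ - r) ^ 2 * e * (2 / σ₂ - e)) := by
    have : 1 / σ₂ ≤ 2 / σ₂ := by gcongr; norm_num
    have : 0 ≤ 2 / σ₂ - e := by linarith
    positivity
  have h₃ : 0 ≤ (σ₁ + p₁ * (σ₁ / (1 + σ₂ * p₂)) ^ 2) * assetTheta1 r μ₁ μ₂ σ₁ σ₂ p₁ p₂ ^ 2 := by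
    positivity
  calc -(2 * |r| * p₁)
      ≤ -(2 * r * p₁) + p₁ * ((μ₂ - r) ^ 2 * e * (2 / σ₂ - e)) +
          (σ₁ + p₁ * (σ₁ / (1 + σ₂ * p₂)) ^ 2) * assetTheta1 r μ₁ μ₂ σ₁ σ₂ p₁ p₂ ^ 2 := by
        linarith
    _ = _ := by ring

theorem abs_assetTheta1_le (hσ₁ : 0 < σ₁) (hσ₂ : 0 < σ₂) (hp₁ : 0 ≤ p₁) (hp₂ : 0 ≤ p₂) :
    |assetTheta1 r μ₁ μ₂ σ₁ σ₂ p₁ p₂| ≤ (|μ₁ - r| + 2 * σ₁ * |μ₂ - r| / σ₂) / σ₁ * p₁ := by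
  have hc : 0 < 1 + σ₂ * p₂ := by positivity
  rw [assetTheta1_eq hσ₂.ne' hc.ne']
  set e := p₂ / (1 + σ₂ * p₂)
  set x := σ₁ / (1 + σ₂ * p₂)
  have he : e ≤ 1 / σ₂ := div_one_add_mul_le_one_div hσ₂ hp₂
  have hx : x ≤ σ₁ := div_le_self hσ₁.le (le_add_of_nonneg_right (by positivity))
  have hW : σ₁ ≤ σ₁ + p₁ * x ^ 2 := by nlinarith [sq_nonneg x]
  have hnum : |μ₁ - r - (μ₂ - r) * (σ₁ + x) * e| ≤ |μ₁ - r| + 2 * σ₁ * |μ₂ - r| / σ₂ := by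
    have hxe : (σ₁ + x) * e ≤ 2 * σ₁ / σ₂ := by
      calc (σ₁ + x) * e ≤ (2 * σ₁) * (1 / σ₂) := by gcongr; linarith
        _ = 2 * σ₁ / σ₂ := by ring
    calc |μ₁ - r - (μ₂ - r) * (σ₁ + x) * e|
        ≤ |μ₁ - r| + |μ₂ - r| * ((σ₁ + x) * e) := by
          rw [mul_assoc]; exact abs_sub_mul_le (by positivity)
      _ ≤ |μ₁ - r| + |μ₂ - r| * (2 * σ₁ / σ₂) := by gcongr
      _ = _ := by ring
  rw [abs_div, abs_neg, abs_mul, abs_of_nonneg hp₁,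
    abs_of_pos (show 0 < σ₁ + p₁ * x ^ 2 by positivity)]
  calc p₁ * |μ₁ - r - (μ₂ - r) * (σ₁ + x) * e| / (σ₁ + p₁ * x ^ 2)
      ≤ p₁ * (|μ₁ - r| + 2 * σ₁ * |μ₂ - r| / σ₂) / σ₁ := by gcongr
    _ = _ := by ring

theorem neg_mul_le_assetRhs2 {Θ : ℝ} (hσ₁ : 0 < σ₁) (hσ₂ : 0 < σ₂) (hp₂ : 0 ≤ p₂)
    (hθ : |assetTheta1 r μ₁ μ₂ σ₁ σ₂ p₁ p₂| ≤ Θ) :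
    -((2 * |r| + 2 * (|μ₁ - r| + σ₁ * |μ₂ - r| / σ₂) * Θ + σ₁ ^ 2 * Θ ^ 2) * p₂) ≤
      assetRhs2 r μ₁ μ₂ σ₁ σ₂ p₁ p₂ := by
  have hc : 0 < 1 + σ₂ * p₂ := by positivity
  rw [assetRhs2_eq hσ₂.ne' hc.ne']
  set θ := assetTheta1 r μ₁ μ₂ σ₁ σ₂ p₁ p₂
  set e := p₂ / (1 + σ₂ * p₂)
  set x := σ₁ / (1 + σ₂ * p₂)
  have he : e ≤ 1 / σ₂ := div_one_add_mul_le_one_div hσ₂ hp₂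
  have hx : x ≤ σ₁ := div_le_self hσ₁.le (le_add_of_nonneg_right (by positivity))
  have hcoef : |μ₁ - r - (μ₂ - r) * σ₁ * e| ≤ |μ₁ - r| + σ₁ * |μ₂ - r| / σ₂ := by
    calc |μ₁ - r - (μ₂ - r) * σ₁ * e| ≤ |μ₁ - r| + |μ₂ - r| * (σ₁ * e) := by
          rw [mul_assoc]; exact abs_sub_mul_le (by positivity)
      _ ≤ |μ₁ - r| + |μ₂ - r| * (σ₁ * (1 / σ₂)) := by gcongr
      _ = _ := by ring
  have h₁ : (μ₁ - r - (μ₂ - r) * σ₁ * e) * θ ≤ (|μ₁ - r| + σ₁ * |μ₂ - r| / σ₂) * Θ :=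
    (le_abs_self _).trans (by rw [abs_mul]; gcongr)
  have h₂ : σ₁ * x * θ ^ 2 ≤ σ₁ ^ 2 * Θ ^ 2 := by
    rw [sq σ₁, ← sq_abs θ]
    gcongr
  have h₃ : 0 ≤ (μ₂ - r) ^ 2 * e / σ₂ := by positivity
  have h₄ := le_abs_self r
  have hbracket : -(2 * |r| + 2 * (|μ₁ - r| + σ₁ * |μ₂ - r| / σ₂) * Θ + σ₁ ^ 2 * Θ ^ 2) ≤
      -2 * r + (μ₂ - r) ^ 2 * e / σ₂ - 2 * (μ₁ - r - (μ₂ - r) * σ₁ * e) * θ - σ₁ * x * θ ^ 2 := by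
    linarith
  linarith [mul_le_mul_of_nonneg_left hbracket hp₂]

def assetField (r μ₁ μ₂ σ₁ σ₂ : ℝ) (p : ℝ × ℝ) : ℝ × ℝ :=
  (assetRhs1 r μ₁ μ₂ σ₁ σ₂ p.1 p.2, assetRhs2 r μ₁ μ₂ σ₁ σ₂ p.1 p.2)

theorem assetField_fst_zero (y : ℝ) : (assetField r μ₁ μ₂ σ₁ σ₂ (0, y)).1 = 0 := by
  simp [assetField, assetRhs1, assetTheta1]

theorem assetField_snd_zero (x : ℝ) : (assetField r μ₁ μ₂ σ₁ σ₂ (x, 0)).2 = 0 := by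
  simp [assetField, assetRhs2]

theorem contDiffOn_assetField (hσ₁ : 0 < σ₁) (hσ₂ : 0 < σ₂) :
    ContDiffOn ℝ 1 (assetField r μ₁ μ₂ σ₁ σ₂) (Ici 0) := by
  have hD : ∀ p ∈ Ici (0 : ℝ × ℝ), σ₂ + σ₂ ^ 2 * p.2 ≠ 0 := fun p hp => by
    have : 0 ≤ p.2 := hp.2
    positivity
  have hW : ∀ p ∈ Ici (0 : ℝ × ℝ),
      σ₁ + p.1 * (σ₁ - σ₂ ^ 2 * p.2 * σ₁ / (σ₂ + σ₂ ^ 2 * p.2)) ^ 2 ≠ 0 := fun p hp => by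
    have : 0 ≤ p.1 := hp.1
    positivity
  unfold assetField assetRhs1 assetRhs2 assetTheta1
  fun_prop (disch := assumption)

theorem exists_lipschitzOnWith_assetField (hσ₁ : 0 < σ₁) (hσ₂ : 0 < σ₂) (M : ℝ) :
    ∃ K, LipschitzOnWith K (assetField r μ₁ μ₂ σ₁ σ₂) (Icc 0 (M, M)) :=
  ((contDiffOn_assetField hσ₁ hσ₂).mono Icc_subset_Ici_self).exists_lipschitzOnWith one_ne_zero
    (convex_Icc _ _) isCompact_Icc

/-- The velocity is the field at a point `q s` between `0` and `P s`, so that the bound covers both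
solutions (`q = P`) and solutions of the truncated field (`q = boxClamp M ∘ P`). -/
theorem exists_bound_of_hasDerivWithinAt_assetField (hσ₁ : 0 < σ₁) (hσ₂ : 0 < σ₂) (T : ℝ) :
    ∃ M, 0 ≤ M ∧ ∀ P q : ℝ → ℝ × ℝ,
      (∀ s ∈ Icc 0 T, HasDerivWithinAt P (assetField r μ₁ μ₂ σ₁ σ₂ (q s)) (Icc 0 T) s) →
      (∀ s ∈ Icc 0 T, q s ∈ Icc 0 (P s)) → P T = (1, 1) → ∀ s ∈ Icc 0 T, P s ≤ (M, M) := by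
  set M₁ := exp (2 * |r| * T)
  set Θ := (|μ₁ - r| + 2 * σ₁ * |μ₂ - r| / σ₂) / σ₁ * M₁
  set K := 2 * |r| + 2 * (|μ₁ - r| + σ₁ * |μ₂ - r| / σ₂) * Θ + σ₁ ^ 2 * Θ ^ 2
  have hexp : ∀ {L : ℝ}, 0 ≤ L → ∀ s ∈ Icc 0 T, 1 * exp (L * (T - s)) ≤ exp (L * T) :=
    fun hL s hs => by rw [one_mul]; gcongr; linarith [hs.1]
  refine ⟨max M₁ (exp (K * T)), (exp_pos _).le.trans (le_max_left _ _),
    fun P q hP hq hPT => ?_⟩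
  have hP' := fun s hs => hasDerivWithinAt_prodMk_iff.1 (hP s hs)
  have hP₁ : ∀ s ∈ Icc 0 T, (P s).1 ≤ M₁ := fun s hs =>
    (le_mul_exp_of_hasDerivWithinAt (fun s hs => (hP' s hs).1) (by rw [hPT])
      (fun s hs => by
        have hqs := hq s hs
        have := neg_two_mul_abs_mul_le_assetRhs1 (r := r) (μ₁ := μ₁) (μ₂ := μ₂) hσ₁ hσ₂
          hqs.1.1 hqs.1.2
        nlinarith [abs_nonneg r, hqs.2.1])
      s hs).trans (hexp (by positivity) s hs)
  have hP₂ : ∀ s ∈ Icc 0 T, (P s).2 ≤ exp (K * T) := fun s hs =>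
    (le_mul_exp_of_hasDerivWithinAt (fun s hs => (hP' s hs).2) (by rw [hPT])
      (fun s hs => by
        have hqs := hq s hs
        have hθ := (abs_assetTheta1_le (r := r) (μ₁ := μ₁) (μ₂ := μ₂) hσ₁ hσ₂ hqs.1.1
          hqs.1.2).trans
          (mul_le_mul_of_nonneg_left (hqs.2.1.trans (hP₁ s hs)) (by positivity))
        have := neg_mul_le_assetRhs2 hσ₁ hσ₂ hqs.1.2 hθ
        nlinarith [hqs.2.2, show 0 ≤ K by positivity])
      s hs).trans (hexp (by positivity) s hs)
  exact fun s hs => ⟨(hP₁ s hs).trans (le_max_left _ _), (hP₂ s hs).trans (le_max_right _ _)⟩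

end AssetField

section Solutions

variable {T r μ₁ μ₂ σ₁ σ₂ : ℝ}

def IsAssetFieldSolution (T r μ₁ μ₂ σ₁ σ₂ : ℝ) (P : ℝ → ℝ × ℝ) : Prop :=
  P T = (1, 1) ∧
    ∀ s ∈ Icc 0 T, 0 ≤ P s ∧ HasDerivWithinAt P (assetField r μ₁ μ₂ σ₁ σ₂ (P s)) (Icc 0 T) s

theorem isAssetERESolution_iff {P₁ P₂ : ℝ → ℝ} :
    IsAssetERESolution T r μ₁ μ₂ σ₁ σ₂ P₁ P₂ ↔
      IsAssetFieldSolution T r μ₁ μ₂ σ₁ σ₂ fun t => (P₁ t, P₂ t) := by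
  constructor
  · rintro ⟨hnonneg, hderiv, hT₂, hT₁⟩
    exact ⟨Prod.ext hT₁ hT₂, fun s hs => ⟨hnonneg s hs,
      hasDerivWithinAt_prodMk_iff.2 ⟨(hderiv s hs).2, (hderiv s hs).1⟩⟩⟩
  · rintro ⟨hT, h⟩
    exact ⟨fun s hs => (h s hs).1,
      fun s hs => (hasDerivWithinAt_prodMk_iff.1 (h s hs).2).symm,
      congrArg Prod.snd hT, congrArg Prod.fst hT⟩

theorem exists_isAssetFieldSolution (hσ₁ : 0 < σ₁) (hσ₂ : 0 < σ₂) (hT : 0 ≤ T) :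
    ∃ z, IsAssetFieldSolution T r μ₁ μ₂ σ₁ σ₂ z := by
  obtain ⟨M, hM, hbound⟩ :=
    exists_bound_of_hasDerivWithinAt_assetField (r := r) (μ₁ := μ₁) (μ₂ := μ₂) hσ₁ hσ₂ T
  obtain ⟨K, hK⟩ := exists_lipschitzOnWith_assetField (r := r) (μ₁ := μ₁) (μ₂ := μ₂) hσ₁ hσ₂ M
  obtain ⟨L, hL⟩ := isCompact_Icc.exists_bound_of_continuousOn
    ((contDiffOn_assetField (r := r) (μ₁ := μ₁) (μ₂ := μ₂) hσ₁ hσ₂).continuousOn.mono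
      (Icc_subset_Ici_self : Icc (0 : ℝ × ℝ) (M, M) ⊆ Ici 0))
  set F := fun p => assetField r μ₁ μ₂ σ₁ σ₂ (boxClamp M p)
  have hF : LipschitzWith (K * 1) F := lipschitzOnWith_univ.1
    (hK.comp (lipschitzWith_boxClamp M).lipschitzOnWith fun p _ => boxClamp_mem hM p)
  obtain ⟨z, hzT, hz⟩ := exists_forall_mem_Icc_hasDerivWithinAt_of_lipschitzWith hF
    (fun p => hL _ (boxClamp_mem hM p)) ⟨T, hT, le_rfl⟩ (1, 1)
  have hF_axes := abs_le_of_lipschitzWith_of_vanishing_on_axes hF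
    (fun y => by simp [F, boxClamp, assetField_fst_zero])
    (fun x => by simp [F, boxClamp, assetField_snd_zero])
  have hz' := fun s hs => hasDerivWithinAt_prodMk_iff.1 (hz s hs)
  have hz₀ : ∀ s ∈ Icc 0 T, 0 ≤ z s := fun s hs =>
    ⟨(pos_of_abs_deriv_le_mul_abs (fun t ht => (hz' t ht).1) (fun t _ => (hF_axes (z t)).1)
        (by simp [hzT]) s hs).le,
      (pos_of_abs_deriv_le_mul_abs (fun t ht => (hz' t ht).2) (fun t _ => (hF_axes (z t)).2)
        (by simp [hzT]) s hs).le⟩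
  have hzM := hbound z (boxClamp M ∘ z) hz (fun s hs => boxClamp_mem_Icc_zero (hz₀ s hs)) hzT
  refine ⟨z, hzT, fun s hs => ⟨hz₀ s hs, ?_⟩⟩
  simpa only [F, boxClamp_eq ⟨hz₀ s hs, hzM s hs⟩] using hz s hs

theorem IsAssetFieldSolution.eqOn (hσ₁ : 0 < σ₁) (hσ₂ : 0 < σ₂) {P Q : ℝ → ℝ × ℝ}
    (hP : IsAssetFieldSolution T r μ₁ μ₂ σ₁ σ₂ P) (hQ : IsAssetFieldSolution T r μ₁ μ₂ σ₁ σ₂ Q) :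
    EqOn P Q (Icc 0 T) := by
  obtain ⟨M, -, hbound⟩ :=
    exists_bound_of_hasDerivWithinAt_assetField (r := r) (μ₁ := μ₁) (μ₂ := μ₂) hσ₁ hσ₂ T
  obtain ⟨K, hK⟩ := exists_lipschitzOnWith_assetField (r := r) (μ₁ := μ₁) (μ₂ := μ₂) hσ₁ hσ₂ M
  have hbox : ∀ R, IsAssetFieldSolution T r μ₁ μ₂ σ₁ σ₂ R → ∀ s ∈ Icc 0 T, R s ∈ Icc 0 (M, M) :=
    fun R hR s hs => ⟨(hR.2 s hs).1, hbound R R (fun s hs => (hR.2 s hs).2)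
      (fun s hs => ⟨(hR.2 s hs).1, le_rfl⟩) hR.1 s hs⟩
  exact eqOn_Icc_of_hasDerivWithinAt_of_lipschitzOnWith hK (fun s hs => (hP.2 s hs).2)
    (fun s hs => (hQ.2 s hs).2) (hbox P hP) (hbox Q hQ) (hP.1.trans hQ.1.symm)

end Solutions

/-- Global well-posedness of the asset-management scalar equilibrium Riccati equation:
there is exactly one pair of nonnegative continuously differentiable solutions on
`[0,T]`. -/
theorem stmt_18 (T r μ₁ μ₂ σ₁ σ₂ : ℝ) (hT : 0 < T) (hσ₁ : 0 < σ₁) (hσ₂ : 0 < σ₂) :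
    ∃ P₁ P₂ : ℝ → ℝ, IsAssetERESolution T r μ₁ μ₂ σ₁ σ₂ P₁ P₂ ∧
      ∀ Q₁ Q₂ : ℝ → ℝ, IsAssetERESolution T r μ₁ μ₂ σ₁ σ₂ Q₁ Q₂ →
        ∀ s ∈ Set.Icc (0 : ℝ) T, Q₁ s = P₁ s ∧ Q₂ s = P₂ s := by
  obtain ⟨z, hz⟩ : ∃ z, IsAssetFieldSolution T r μ₁ μ₂ σ₁ σ₂ z :=
    exists_isAssetFieldSolution hσ₁ hσ₂ hT.le
  refine ⟨fun s => (z s).1, fun s => (z s).2, isAssetERESolution_iff.2 hz,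
    fun Q₁ Q₂ hQ s hs => ?_⟩
  exact Prod.ext_iff.1 ((isAssetERESolution_iff.1 hQ).eqOn hσ₁ hσ₂ hz hs)
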